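/- For every constant specification CS for LPC⁺, the regularity rule JRE_⇔ is not validity preserving in LPC⁺_CS: there exist formulas φ, ψ and a term t such that ⊨_{LPC⁺_CS} φ ⇔ ψ but not ⊨_{LPC⁺_CS} [t]φ ⇔ [t]ψ. In particular, for any atomic proposition p and justification variable x, ⊨_{LPC⁺_CS} ((p∧p)>p) ⇔ (p∨¬p) but not ⊨_{LPC⁺_CS} [x]((p∧p)>p) ⇔ [x](p∨¬p). -/

import Mathlib

namespace LPCplus

/-- Justification terms: constants, variables, application, sum, proof checker. -/
inductive Tm : Type
  | const : ℕ → Tm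
  | var   : ℕ → Tm
  | app   : Tm → Tm → Tm
  | sum   : Tm → Tm → Tm
  | bang  : Tm → Tm
  deriving DecidableEq

/-- Formulas of LPC⁺. -/
inductive Fm : Type
  | atom : ℕ → Fm
  | neg  : Fm → Fm
  | and  : Fm → Fm → Fm
  | imp  : Fm → Fm → Fm
  | cond : Fm → Fm → Fm   -- the counterfactual conditional `>`
  | box  : Tm → Fm → Fm   -- justification assertion `[t]φ`
  deriving DecidableEq

/-- A classical propositional tautology in the language of LPC⁺: true under every
boolean valuation of formulas that respects the classical connectives ¬, ∧, ⊃. -/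
def IsTaut (φ : Fm) : Prop :=
  ∀ v : Fm → Bool,
    (∀ ψ, v (Fm.neg ψ) = !(v ψ)) →
    (∀ ψ χ, v (Fm.and ψ χ) = (v ψ && v χ)) →
    (∀ ψ χ, v (Fm.imp ψ χ) = (!(v ψ) || v χ)) →
    v φ = true

/-- Axioms of LPC⁺. -/
inductive Ax : Fm → Prop
  | taut (φ : Fm) : IsTaut φ → Ax φ
  | a2 (φ ψ χ : Fm) : Ax ((φ.cond (ψ.imp χ)).imp ((φ.cond ψ).imp (φ.cond χ)))
  | a3 (φ : Fm) : Ax (φ.cond φ)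
  | a4 (φ ψ : Fm) : Ax ((φ.cond ψ).imp (φ.imp ψ))
  | a5 (s t : Tm) (φ ψ : Fm) :
      Ax (((Fm.box s (φ.cond ψ)).and (Fm.box t φ)).cond (Fm.box (s.app t) ψ))
  | a6 (s t : Tm) (φ : Fm) : Ax ((Fm.box s φ).cond (Fm.box (s.sum t) φ))
  | a7 (s t : Tm) (φ : Fm) : Ax ((Fm.box t φ).cond (Fm.box (s.sum t) φ))
  | a8 (t : Tm) (φ : Fm) : Ax ((Fm.box t φ).cond φ)
  | a9 (t : Tm) (φ : Fm) : Ax ((Fm.box t φ).cond (Fm.box t.bang (Fm.box t φ)))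

/-- A constant specification: a set of formulas `[c]φ` with `φ` an axiom instance. -/
def IsCS (CS : Set Fm) : Prop :=
  ∀ χ ∈ CS, ∃ (c : ℕ) (φ : Fm), χ = Fm.box (Tm.const c) φ ∧ Ax φ

/-- Derivability in LPC⁺_CS. -/
inductive Prv (CS : Set Fm) : Fm → Prop
  | ax  {φ} : Ax φ → Prv CS φ
  | cs  {φ} : φ ∈ CS → Prv CS φ
  | mp  {φ ψ} : Prv CS (φ.imp ψ) → Prv CS φ → Prv CS ψ
  | rcn (φ : Fm) {ψ} : Prv CS ψ → Prv CS (φ.cond ψ)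

/-- ⊥ := φ ∧ ¬φ (a fixed instance). -/
def botF : Fm := (Fm.atom 0).and (Fm.neg (Fm.atom 0))

/-- ⊤ := ¬⊥. -/
def topF : Fm := Fm.neg botF

/-- Conjunction ψ₁ ∧ ⋯ ∧ ψₙ of a list (⊤ for the empty list). -/
def listConj : List Fm → Fm
  | [] => topF
  | ψ :: l => l.foldl Fm.and ψ

/-- T ⊢_{LPC⁺_CS} φ iff ⊢_{LPC⁺_CS} (ψ₁ ∧ ⋯ ∧ ψₙ) ⊃ φ for some ψ₁,…,ψₙ ∈ T. -/
def Deriv (CS : Set Fm) (T : Set Fm) (φ : Fm) : Prop :=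
  ∃ l : List Fm, (∀ ψ ∈ l, ψ ∈ T) ∧ Prv CS ((listConj l).imp φ)

def Consis (CS : Set Fm) (T : Set Fm) : Prop := ¬ Deriv CS T botF

/-- Maximal LPC⁺_CS-consistent sets. -/
def MCS (CS : Set Fm) (Γ : Set Fm) : Prop :=
  Consis CS Γ ∧ ∀ Δ, Consis CS Δ → Γ ⊆ Δ → Δ = Γ

/-- A relational model. -/
structure Model where
  W : Type
  N : Set W
  Rf : Fm → W → W → Prop
  Rf_norm : ∀ φ w v, Rf φ w v → w ∈ N ∧ v ∈ N   -- R_φ is a relation on W_N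
  Rt : Tm → W → W → Prop
  Vn : W → Set ℕ     -- valuation at normal states (sets of atoms)
  Vf : W → Set Fm    -- valuation at non-normal states (sets of formulas)

/-- Truth at a state. -/
def Sat (M : Model) : Fm → M.W → Prop
  | .atom p, w => (w ∈ M.N ∧ p ∈ M.Vn w) ∨ (w ∉ M.N ∧ Fm.atom p ∈ M.Vf w)
  | .neg φ, w => (w ∈ M.N ∧ ¬ Sat M φ w) ∨ (w ∉ M.N ∧ Fm.neg φ ∈ M.Vf w)
  | .and φ ψ, w => (w ∈ M.N ∧ Sat M φ w ∧ Sat M ψ w) ∨ (w ∉ M.N ∧ Fm.and φ ψ ∈ M.Vf w)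
  | .imp φ ψ, w => (w ∈ M.N ∧ (Sat M φ w → Sat M ψ w)) ∨ (w ∉ M.N ∧ Fm.imp φ ψ ∈ M.Vf w)
  | .cond φ ψ, w =>
      (w ∈ M.N ∧ ∀ v, M.Rf φ w v → Sat M ψ v) ∨ (w ∉ M.N ∧ Fm.cond φ ψ ∈ M.Vf w)
  | .box t φ, w =>
      (w ∈ M.N ∧ ∀ v, M.Rt t w v → Sat M φ v) ∨ (w ∉ M.N ∧ Fm.box t φ ∈ M.Vf w)

/-- Conditions (C1)–(C7) making a relational model an LPC⁺_CS-model. -/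
def IsModel (CS : Set Fm) (M : Model) : Prop :=
  (∀ φ (w v : M.W), w ∈ M.N → M.Rf φ w v → Sat M φ v) ∧
  (∀ φ (w : M.W), w ∈ M.N → Sat M φ w → M.Rf φ w w) ∧
  (∀ (c : ℕ) φ, Fm.box (Tm.const c) φ ∈ CS →
      ∀ (w v : M.W), w ∈ M.N → M.Rt (Tm.const c) w v → Sat M φ v) ∧
  (∀ (s t : Tm) (w v : M.W), w ∈ M.N → M.Rt (s.sum t) w v → M.Rt s w v ∧ M.Rt t w v) ∧
  (∀ (s t : Tm) (w v : M.W), w ∈ M.N → M.Rt (s.app t) w v →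
      ∀ φ ψ, Sat M ((Fm.box s (φ.cond ψ)).and (Fm.box t φ)) w → Sat M ψ v) ∧
  (∀ (t : Tm) (w : M.W), w ∈ M.N → M.Rt t w w) ∧
  (∀ (t : Tm) (w v u : M.W), w ∈ M.N → M.Rt t.bang w v → M.Rt t v u → M.Rt t w u)

/-- LPC⁺_CS-validity. -/
def Valid (CS : Set Fm) (φ : Fm) : Prop :=
  ∀ M : Model, IsModel CS M → ∀ w ∈ M.N, Sat M φ w

/-- Local semantic consequence. -/
def Conseq (CS : Set Fm) (T : Set Fm) (φ : Fm) : Prop :=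
  ∀ M : Model, IsModel CS M → ∀ w ∈ M.N, (∀ ψ ∈ T, Sat M ψ w) → Sat M φ w

/-- Material equivalence φ ≡ ψ. -/
def eqv (φ ψ : Fm) : Fm := (φ.imp ψ).and (ψ.imp φ)

/-- Counterfactual biconditional φ ⇔ ψ. -/
def condEqv (φ ψ : Fm) : Fm := (φ.cond ψ).and (ψ.cond φ)

/-- Disjunction φ ∨ ψ := ¬(¬φ ∧ ¬ψ). -/
def orF (φ ψ : Fm) : Fm := Fm.neg ((Fm.neg φ).and (Fm.neg ψ))

/-- The canonical relational model for LPC⁺_CS. -/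
def canonical (CS : Set Fm) : Model where
  W := Set Fm
  N := {Γ | MCS CS Γ}
  Rf φ Γ Δ := MCS CS Γ ∧ MCS CS Δ ∧ {ψ | Fm.cond φ ψ ∈ Γ} ⊆ Δ
  Rf_norm := fun _ _ _ h => ⟨h.1, h.2.1⟩
  Rt t Γ Δ := {ψ | Fm.box t ψ ∈ Γ} ⊆ Δ
  Vn Γ := {p | Fm.atom p ∈ Γ}
  Vf Γ := Γ

end LPCplus

/-!
Both `(p∧p)>p` and `p∨¬p` hold at every normal state, hence they are counterfactually
equivalent. Non-normal states, however, force arbitrary sets of formulas, so they separate any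
two syntactically distinct formulas: let a normal state `w` see through `x` itself and a
non-normal state forcing exactly `(p∧p)>p`. Then `[x]((p∧p)>p)` holds at `w` while `[x](p∨¬p)`
fails, and by (C2) `w` is its own `[x]((p∧p)>p)`-successor, so
`[x]((p∧p)>p) > [x](p∨¬p)` fails at `w`. Defining truth at `w` by a recursion independent of the
model breaks the circularity between `R_φ` and truth in checking (C1)–(C7).
-/

namespace LPCplus

section Semantics

variable {M : Model} {w : M.W}

theorem sat_iff_mem_Vf_of_not_mem_N (hw : w ∉ M.N) (φ : Fm) : Sat M φ w ↔ φ ∈ M.Vf w := by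
  cases φ <;> simp [Sat, hw]

theorem sat_atom_iff (hw : w ∈ M.N) (q : ℕ) : Sat M (.atom q) w ↔ q ∈ M.Vn w := by
  simp [Sat, hw]

theorem sat_neg_iff (hw : w ∈ M.N) (φ : Fm) : Sat M (.neg φ) w ↔ ¬ Sat M φ w := by
  simp [Sat, hw]

theorem sat_and_iff (hw : w ∈ M.N) (φ ψ : Fm) :
    Sat M (.and φ ψ) w ↔ Sat M φ w ∧ Sat M ψ w := by
  simp [Sat, hw]

theorem sat_imp_iff (hw : w ∈ M.N) (φ ψ : Fm) :
    Sat M (.imp φ ψ) w ↔ (Sat M φ w → Sat M ψ w) := by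
  simp [Sat, hw]

theorem sat_cond_iff (hw : w ∈ M.N) (φ ψ : Fm) :
    Sat M (.cond φ ψ) w ↔ ∀ v, M.Rf φ w v → Sat M ψ v := by
  simp [Sat, hw]

theorem sat_box_iff (hw : w ∈ M.N) (t : Tm) (φ : Fm) :
    Sat M (.box t φ) w ↔ ∀ v, M.Rt t w v → Sat M φ v := by
  simp [Sat, hw]

end Semantics

section Validity

variable {CS : Set Fm}

theorem valid_orF_neg_self (φ : Fm) : Valid CS (orF φ (.neg φ)) := by
  intro M _ _ hw
  simp [orF, sat_neg_iff hw, sat_and_iff hw]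

theorem valid_and_cond_left (φ ψ : Fm) : Valid CS ((φ.and ψ).cond φ) := by
  intro M hM w hw
  rw [sat_cond_iff hw]
  intro v hv
  have hvN : v ∈ M.N := (M.Rf_norm _ _ _ hv).2
  exact ((sat_and_iff hvN φ ψ).1 (hM.1 _ w v hw hv)).1

theorem valid_cond_of_valid {ψ : Fm} (hψ : Valid CS ψ) (φ : Fm) : Valid CS (φ.cond ψ) :=
  fun M hM _ hw => (sat_cond_iff hw φ ψ).2 fun v hv => hψ M hM v (M.Rf_norm _ _ _ hv).2

theorem valid_condEqv_of_valid {φ ψ : Fm} (hφ : Valid CS φ) (hψ : Valid CS ψ) :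
    Valid CS (condEqv φ ψ) :=
  fun M hM w hw => (sat_and_iff hw _ _).2
    ⟨valid_cond_of_valid hψ φ M hM w hw, valid_cond_of_valid hφ ψ M hM w hw⟩

end Validity

section TwoStateModel

variable (x : ℕ) (S : Set Fm)

def twoStateTruth : Fm → Prop
  | .atom _ => False
  | .neg φ => ¬ twoStateTruth φ
  | .and φ ψ => twoStateTruth φ ∧ twoStateTruth ψ
  | .imp φ ψ | .cond φ ψ => twoStateTruth φ → twoStateTruth ψ
  | .box t φ => twoStateTruth φ ∧ (t = .var x → φ ∈ S)

/-- A normal state `true` that sees, through the variable `x` only, a non-normal state `false`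
forcing exactly the formulas of `S`. -/
def twoStateModel : Model where
  W := Bool
  N := {true}
  Rf φ a b := a = true ∧ b = true ∧ twoStateTruth x S φ
  Rf_norm := fun _ _ _ h => ⟨h.1, h.2.1⟩
  Rt t _ b := b = true ∨ t = .var x
  Vn _ := ∅
  Vf _ := S

theorem sat_twoStateModel_false (φ : Fm) : Sat (twoStateModel x S) φ false ↔ φ ∈ S :=
  sat_iff_mem_Vf_of_not_mem_N Bool.false_ne_true φ

theorem sat_twoStateModel_true (φ : Fm) :
    Sat (twoStateModel x S) φ true ↔ twoStateTruth x S φ := by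
  have hN : true ∈ (twoStateModel x S).N := rfl
  induction φ with
  | atom q => exact iff_of_false ((sat_atom_iff hN q).not.2 (Set.notMem_empty q)) id
  | neg φ ih => simp [sat_neg_iff hN, twoStateTruth, ih]
  | and φ ψ ihφ ihψ => simp [sat_and_iff hN, twoStateTruth, ihφ, ihψ]
  | imp φ ψ ihφ ihψ => simp [sat_imp_iff hN, twoStateTruth, ihφ, ihψ]
  | cond φ ψ _ ihψ =>
    rw [sat_cond_iff hN]
    constructor
    · exact fun h hφ => ihψ.1 (h true ⟨rfl, rfl, hφ⟩)
    · rintro h v ⟨-, rfl, hφ⟩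
      exact ihψ.2 (h hφ)
  | box t φ ih =>
    rw [sat_box_iff hN]
    constructor
    · intro h
      exact ⟨ih.1 (h true (Or.inl rfl)),
        fun ht => (sat_twoStateModel_false x S φ).1 (h false (Or.inr ht))⟩
    · rintro ⟨hφ, hS⟩ (_ | _) hv
      · exact (sat_twoStateModel_false x S φ).2 (hS (hv.resolve_left Bool.false_ne_true))
      · exact ih.2 hφ

open Classical in
theorem twoStateTruth_of_ax {φ : Fm} (h : Ax φ) : twoStateTruth x S φ := by
  induction h with
  | taut φ hφ =>
    simpa using hφ (fun ψ => decide (twoStateTruth x S ψ))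
      (fun ψ => by by_cases twoStateTruth x S ψ <;> simp [twoStateTruth, *])
      (fun ψ χ => by by_cases twoStateTruth x S ψ <;> simp [twoStateTruth, *])
      (fun ψ χ => by by_cases twoStateTruth x S ψ <;> simp [twoStateTruth, *])
  | _ => simp only [twoStateTruth]; tauto

theorem isModel_twoStateModel {CS : Set Fm} (hCS : IsCS CS) :
    IsModel CS (twoStateModel x S) := by
  refine ⟨?_, ?_, ?_, ?_, ?_, ?_, ?_⟩
  · rintro φ w v - ⟨-, rfl, hφ⟩
    exact (sat_twoStateModel_true x S φ).2 hφ
  · rintro φ w rfl hφ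
    exact ⟨rfl, rfl, (sat_twoStateModel_true x S φ).1 hφ⟩
  · rintro c φ hc w v - (rfl | hcx)
    · obtain ⟨_, _, hcφ, hax⟩ := hCS _ hc
      cases hcφ
      exact (sat_twoStateModel_true x S φ).2 (twoStateTruth_of_ax x S hax)
    · cases hcx
  · rintro s t w v - (rfl | hx)
    · exact ⟨Or.inl rfl, Or.inl rfl⟩
    · cases hx
  · rintro s t w v rfl (rfl | hx) φ ψ h
    · simp only [sat_twoStateModel_true, twoStateTruth] at h ⊢
      exact h.1.1 h.2.1
    · cases hx
  · rintro t w rfl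
    exact Or.inl rfl
  · rintro t w v u - - hvu
    exact hvu

end TwoStateModel

theorem not_valid_condEqv_box_var_of_ne {CS : Set Fm} (hCS : IsCS CS) {φ ψ : Fm}
    (hφ : Valid CS φ) (hne : φ ≠ ψ) (x : ℕ) :
    ¬ Valid CS (condEqv (.box (.var x) φ) (.box (.var x) ψ)) := by
  set M := twoStateModel x {φ}
  have hM : IsModel CS M := isModel_twoStateModel x {φ} hCS
  have hN : true ∈ M.N := rfl
  have hboxφ : Sat M (.box (.var x) φ) true := by
    rw [sat_box_iff hN]
    rintro (_ | _) -
    · exact (sat_twoStateModel_false x {φ} φ).2 rfl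
    · exact hφ M hM true hN
  have hboxψ : ¬ Sat M (.box (.var x) ψ) true := by
    rw [sat_box_iff hN]
    exact fun h => hne ((sat_twoStateModel_false x {φ} ψ).1 (h false (Or.inr rfl))).symm
  intro hvalid
  have hcond := ((sat_and_iff hN _ _).1 (hvalid M hM true hN)).1
  exact hboxψ ((sat_cond_iff hN _ _).1 hcond true (hM.2.1 _ true hN hboxφ))

theorem regularity_counterexample {CS : Set Fm} (hCS : IsCS CS) (φ : Fm) (x : ℕ) :
    Valid CS (condEqv ((φ.and φ).cond φ) (orF φ (.neg φ))) ∧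
      ¬ Valid CS (condEqv (.box (.var x) ((φ.and φ).cond φ)) (.box (.var x) (orF φ (.neg φ)))) :=
  have hφ : Valid CS ((φ.and φ).cond φ) := valid_and_cond_left φ φ
  ⟨valid_condEqv_of_valid hφ (valid_orF_neg_self φ),
    not_valid_condEqv_box_var_of_ne hCS hφ (by simp [orF]) x⟩

end LPCplus

open LPCplus in
/-- The regularity rule JRE_⇔ is not validity preserving in LPC⁺_CS;
in particular this fails for φ = (p∧p)>p, ψ = p∨¬p and t = x. -/
theorem stmt_4 (CS : Set Fm) (hCS : IsCS CS) :
    (∃ (φ ψ : Fm) (t : Tm),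
        Valid CS (condEqv φ ψ) ∧ ¬ Valid CS (condEqv (Fm.box t φ) (Fm.box t ψ))) ∧
    (∀ (p x : ℕ),
        Valid CS (condEqv (((Fm.atom p).and (Fm.atom p)).cond (Fm.atom p))
            (orF (Fm.atom p) (Fm.neg (Fm.atom p)))) ∧
        ¬ Valid CS (condEqv
            (Fm.box (Tm.var x) (((Fm.atom p).and (Fm.atom p)).cond (Fm.atom p)))
            (Fm.box (Tm.var x) (orF (Fm.atom p) (Fm.neg (Fm.atom p)))))) :=
  ⟨⟨_, _, Tm.var 0, regularity_counterexample hCS (Fm.atom 0) 0⟩,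
    fun p x => regularity_counterexample hCS (Fm.atom p) x⟩
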